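/- arXiv:1301.0129 — 3 statements merged into one kernel-verified Lean document; each statement's English description precedes it below -/
import Mathlib

section
/- Fix b > 1 and define nAdicCons_b : ℕ × ℕ → ℕ by nAdicCons_b(x, y') = b^x * (y' + (y' / (b-1)) + 1), where / is integer division. Then nAdicCons_b is a bijection from ℕ × ℕ onto the positive natural numbers. -/
/-! The map `y ↦ y + y / (b - 1) + 1` enumerates, in increasing order, the positive integers not
divisible by `b`: writing `y = (b - 1) q + r` with `r < b - 1`, its value is `b q + (r + 1)`.
Every positive integer is uniquely `b ^ x * m` with `b ∤ m`, since `x` must be the multiplicity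
of `b`. Composing the two bijections gives the theorem. -/

open Set

namespace Nat

lemma add_div_add_one_eq (c y : ℕ) : y + y / c + 1 = (c + 1) * (y / c) + (y % c + 1) := by
  have := div_add_mod y c
  rw [add_one_mul]
  omega

lemma strictMono_add_div_add_one (c : ℕ) : StrictMono fun y => y + y / c + 1 := fun _ _ h => by
  have := Nat.div_le_div_right (c := c) h.le
  dsimp only
  omega

variable {c : ℕ}

lemma add_div_add_one_mod (hc : 0 < c) (y : ℕ) : (y + y / c + 1) % (c + 1) = y % c + 1 := by
  rw [add_div_add_one_eq, mul_comm, mul_add_mod_of_lt (succ_lt_succ (mod_lt y hc))]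

lemma not_dvd_add_div_add_one (hc : 0 < c) (y : ℕ) : ¬c + 1 ∣ y + y / c + 1 := by
  rw [dvd_iff_mod_eq_zero, add_div_add_one_mod hc]
  exact succ_ne_zero _

lemma exists_add_div_add_one_eq (hc : 0 < c) {m : ℕ} (hm : ¬c + 1 ∣ m) :
    ∃ y, y + y / c + 1 = m := by
  have hr : 0 < m % (c + 1) := pos_of_ne_zero (mt dvd_of_mod_eq_zero hm)
  have hr' : m % (c + 1) < c + 1 := mod_lt m (succ_pos c)
  refine ⟨c * (m / (c + 1)) + (m % (c + 1) - 1), ?_⟩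
  rw [mul_add_div hc, div_eq_of_lt (by omega : m % (c + 1) - 1 < c)]
  have := div_add_mod m (c + 1)
  rw [add_one_mul] at this
  omega

lemma bijOn_add_div_add_one (hc : 0 < c) :
    BijOn (fun y => y + y / c + 1) univ {m | ¬c + 1 ∣ m} :=
  ⟨fun y _ => not_dvd_add_div_add_one hc y, (strictMono_add_div_add_one c).injective.injOn,
    fun _ hm => (exists_add_div_add_one_eq hc hm).imp fun _ hy => ⟨mem_univ _, hy⟩⟩

lemma multiplicity_pow_mul_of_not_dvd {b m : ℕ} (hb : 0 < b) (hm : ¬b ∣ m) (k : ℕ) :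
    multiplicity b (b ^ k * m) = k := by
  refine multiplicity_eq_of_dvd_of_not_dvd (dvd_mul_right _ _) ?_
  rwa [pow_succ, mul_dvd_mul_iff_left (pow_ne_zero k hb.ne')]

lemma bijOn_pow_mul {b : ℕ} (hb : 1 < b) :
    BijOn (fun p : ℕ × ℕ => b ^ p.1 * p.2) (univ ×ˢ {m | ¬b ∣ m}) {n | 0 < n} := by
  refine ⟨?_, ?_, fun n hn => ?_⟩
  · rintro ⟨k, m⟩ ⟨-, hm : ¬b ∣ m⟩
    have : m ≠ 0 := by rintro rfl; exact hm (dvd_zero b)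
    exact mul_pos (pow_pos (by omega) k) (pos_of_ne_zero this)
  · rintro ⟨k, m⟩ ⟨-, hm : ¬b ∣ m⟩ ⟨k', m'⟩ ⟨-, hm' : ¬b ∣ m'⟩ (h : b ^ k * m = b ^ k' * m')
    obtain rfl : k = k' := by
      rw [← multiplicity_pow_mul_of_not_dvd (by omega) hm k,
        ← multiplicity_pow_mul_of_not_dvd (by omega) hm' k', h]
    rw [Nat.eq_of_mul_eq_mul_left (pow_pos (by omega) k) h]
  · obtain ⟨k, m, hm, rfl⟩ := exists_eq_pow_mul_and_not_dvd (ne_of_gt hn) b hb.ne'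
    exact ⟨(k, m), ⟨mem_univ k, hm⟩, rfl⟩

end Nat

theorem stmt4 (b : ℕ) (hb : 1 < b) :
    Set.BijOn (fun p : ℕ × ℕ => b ^ p.1 * (p.2 + p.2 / (b - 1) + 1))
      Set.univ {n : ℕ | 0 < n} := by
  obtain ⟨c, rfl⟩ : ∃ c, b = c + 1 := ⟨b - 1, by omega⟩
  have hc : 0 < c := by omega
  rw [Nat.add_sub_cancel, ← univ_prod_univ]
  exact (Nat.bijOn_pow_mul hb).comp ((bijOn_id univ).prodMap (Nat.bijOn_add_div_add_one hc))
end

section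
/- Fix b > 1 and define nAdicPair_b : ℕ × ℕ → ℕ by nAdicPair_b(x, y') = b^x * (y' + (y' / (b-1)) + 1) - 1. Then nAdicPair_b is a bijection from ℕ × ℕ to ℕ. -/
/-!
Put `c y = y + y / (b - 1) + 1`. Writing `y = q (b - 1) + r` with `r < b - 1` gives
`c y = q b + (r + 1)`, so `c` enumerates, in increasing order, exactly the positive integers not
divisible by `b`. Every positive integer is uniquely `b ^ x * k` with `b ∤ k` (`x` being the
multiplicity of `b`), hence `(x, y) ↦ b ^ x * c y` is a bijection onto the positive integers,
and subtracting `1` gives a bijection onto `ℕ`.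
-/

/-- The `y`-th positive natural number (counting from `0`) not divisible by `m + 1`. -/
def nthNonMultiple (m y : ℕ) : ℕ := y + y / m + 1

theorem nthNonMultiple_eq_div_mul_add_mod (m y : ℕ) :
    nthNonMultiple m y = y / m * (m + 1) + (y % m + 1) := by
  have := Nat.div_add_mod y m
  unfold nthNonMultiple
  nlinarith

theorem strictMono_nthNonMultiple (m : ℕ) : StrictMono (nthNonMultiple m) := by
  intro y₁ y₂ hy
  have := Nat.div_le_div_right (c := m) hy.le
  unfold nthNonMultiple
  omega

theorem not_dvd_nthNonMultiple {m : ℕ} (hm : 0 < m) (y : ℕ) :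
    ¬ m + 1 ∣ nthNonMultiple m y := by
  have hmod : nthNonMultiple m y % (m + 1) = y % m + 1 := by
    rw [nthNonMultiple_eq_div_mul_add_mod, Nat.mul_add_mod_self_right,
      Nat.mod_eq_of_lt (by have := Nat.mod_lt y hm; omega)]
  omega

theorem exists_nthNonMultiple_eq {m k : ℕ} (hk : ¬ m + 1 ∣ k) :
    ∃ y, nthNonMultiple m y = k := by
  have hm : 0 < m := Nat.pos_of_ne_zero <| by
    rintro rfl
    exact hk (one_dvd k)
  have hr : k % (m + 1) ≠ 0 := fun h => hk (Nat.dvd_of_mod_eq_zero h)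
  have hr' : k % (m + 1) < m + 1 := Nat.mod_lt k m.succ_pos
  have hqr := Nat.div_add_mod k (m + 1)
  generalize k / (m + 1) = q, k % (m + 1) = r at hr hr' hqr
  refine ⟨q * m + (r - 1), ?_⟩
  have hdiv : (q * m + (r - 1)) / m = q := by
    rw [Nat.mul_comm, Nat.mul_add_div hm, Nat.div_eq_of_lt (show r - 1 < m by omega),
      Nat.add_zero]
  unfold nthNonMultiple
  rw [hdiv, ← hqr]
  ring_nf
  omega

theorem multiplicity_pow_mul_of_not_dvd {b k : ℕ} (hb : 0 < b) (hk : ¬ b ∣ k) (x : ℕ) :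
    multiplicity b (b ^ x * k) = x := by
  refine multiplicity_eq_of_dvd_of_not_dvd (Dvd.intro k rfl) ?_
  rwa [pow_succ, Nat.mul_dvd_mul_iff_left (pow_pos hb x)]

theorem pow_mul_inj_of_not_dvd {b x₁ x₂ k₁ k₂ : ℕ} (hb : 0 < b) (hk₁ : ¬ b ∣ k₁)
    (hk₂ : ¬ b ∣ k₂) (h : b ^ x₁ * k₁ = b ^ x₂ * k₂) : x₁ = x₂ ∧ k₁ = k₂ := by
  have hx : x₁ = x₂ := by
    rw [← multiplicity_pow_mul_of_not_dvd hb hk₁ x₁, h, multiplicity_pow_mul_of_not_dvd hb hk₂]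
  subst hx
  exact ⟨rfl, Nat.eq_of_mul_eq_mul_left (pow_pos hb x₁) h⟩

theorem stmt5 (b : ℕ) (hb : 1 < b) :
    Function.Bijective
      (fun p : ℕ × ℕ => b ^ p.1 * (p.2 + p.2 / (b - 1) + 1) - 1) := by
  obtain ⟨m, rfl⟩ : ∃ m, b = m + 1 := ⟨b - 1, by omega⟩
  have hm : 0 < m := by omega
  change Function.Bijective fun p : ℕ × ℕ => (m + 1) ^ p.1 * nthNonMultiple m p.2 - 1
  have hpos (x y : ℕ) : 0 < (m + 1) ^ x * nthNonMultiple m y :=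
    Nat.mul_pos (pow_pos m.succ_pos x) (Nat.succ_pos _)
  constructor
  · rintro ⟨x₁, y₁⟩ ⟨x₂, y₂⟩ h
    have h' := Nat.sub_one_cancel (hpos x₁ y₁) (hpos x₂ y₂) h
    obtain ⟨rfl, hy⟩ := pow_mul_inj_of_not_dvd m.succ_pos (not_dvd_nthNonMultiple hm y₁)
      (not_dvd_nthNonMultiple hm y₂) h'
    rw [(strictMono_nthNonMultiple m).injective hy]
  · intro n
    obtain ⟨x, k, hk, hn⟩ := Nat.exists_eq_pow_mul_and_not_dvd n.succ_ne_zero (m + 1) (by omega)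
    obtain ⟨y, rfl⟩ := exists_nthNonMultiple_eq hk
    exact ⟨(x, y), by simp only [← hn, Nat.succ_sub_one]⟩
end

section
/- Fix b > 1. For any x, y' ∈ ℕ, the value z = b^x * (y' + (y' / (b-1)) + 1) satisfies: the b-adic valuation of z equals x, i.e., b^x divides z but b^(x+1) does not. -/
/-! Dividing `y` by `b - 1` with quotient `q` and remainder `r` gives
`y + q + 1 = b * q + (r + 1)` with `0 < r + 1 < b`, so `b` does not divide `y + q + 1`
and the `b`-adic valuation of `b ^ x * (y + q + 1)` is exactly `x`. -/

namespace Nat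

theorem add_div_pred_add_one_eq (b y : ℕ) :
    y + y / (b - 1) + 1 = b * (y / (b - 1)) + (y % (b - 1) + 1) := by
  have hy := Nat.div_add_mod y (b - 1)
  rcases b with _ | b
  · simp
  · simp only [add_tsub_cancel_right] at hy ⊢
    linarith

theorem not_dvd_add_div_pred_add_one {b : ℕ} (hb : 1 < b) (y : ℕ) :
    ¬ b ∣ y + y / (b - 1) + 1 := by
  have hr : y % (b - 1) < b - 1 := Nat.mod_lt _ (by omega)
  rw [add_div_pred_add_one_eq, Nat.dvd_iff_mod_eq_zero, Nat.mul_add_mod,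
    Nat.mod_eq_of_lt (by omega)]
  omega

end Nat

theorem stmt6 (b : ℕ) (hb : 1 < b) (x y' : ℕ) :
    b ^ x ∣ b ^ x * (y' + y' / (b - 1) + 1) ∧
    ¬ b ^ (x + 1) ∣ b ^ x * (y' + y' / (b - 1) + 1) := by
  refine ⟨dvd_mul_right _ _, ?_⟩
  rw [pow_succ, Nat.mul_dvd_mul_iff_left (pow_pos (by omega) x)]
  exact Nat.not_dvd_add_div_pred_add_one hb y'
end
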